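/- arXiv:2311.06006 — 2 statements merged into one kernel-verified Lean document; each statement's English description precedes it below -/
import Mathlib

section
/- Let a = a_1⋯a_k ∈ {0,1}^k and b = b_1⋯b_j ∈ {0,1}^j be two finite binary words. Then N(a) < N(b) if and only if X(a) < X(b). (Equivalently, the map g(x,y) = (x−y)/√5 from the set of pairs (X(a),Y(a)) to the natural numbers is order preserving.) -/
open Real Finset

noncomputable section

/-- The golden mean φ = (1+√5)/2. -/
def phi : ℝ := (1 + Real.sqrt 5) / 2

/-- ψ = (1−√5)/2 = −1/φ. -/
def psi : ℝ := (1 - Real.sqrt 5) / 2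

/-- A word `a : Fin k → ℕ` is binary if all its letters are 0 or 1. -/
def IsBin {k : ℕ} (a : Fin k → ℕ) : Prop := ∀ i, a i ≤ 1

/-- N(a) = ∑_{i=1}^k a_i F_{k+2−i}  (here `i : Fin k` corresponds to `i+1`). -/
def Nw {k : ℕ} (a : Fin k → ℕ) : ℕ := ∑ i : Fin k, a i * Nat.fib (k + 1 - (i : ℕ))

/-- X(a) = ∑_{i=1}^k a_i φ^{k+2−i}. -/
def Xw {k : ℕ} (a : Fin k → ℕ) : ℝ := ∑ i : Fin k, (a i : ℝ) * phi ^ (k + 1 - (i : ℕ))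

/-- Y(a) = ∑_{i=1}^k a_i ψ^{k+2−i}. -/
def Yw {k : ℕ} (a : Fin k → ℕ) : ℝ := ∑ i : Fin k, (a i : ℝ) * psi ^ (k + 1 - (i : ℕ))

/-! Since `φ` and `ψ` are the roots of `x² = x + 1`, `X(a) = N(a) φ + M(a)` and
`Y(a) = N(a) ψ + M(a)` for an integer `M(a)`, so `X(a) - Y(a) = N(a) √5`. For binary words `Y`
stays in an open interval of length `1 < √5`. Hence `N(a) < N(b)` forces
`X(b) - X(a) > √5 - 1 > 0`, while `N(a) = N(b)` forces the integer `M(a) - M(b)` to vanish. -/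

lemma phi_eq_goldenRatio : phi = goldenRatio := rfl

lemma psi_eq_goldenConj : psi = goldenConj := rfl

/-- M(a) = ∑_{i=1}^k a_i F_{k+1−i}, indexed as in `Nw`. -/
def Mw {k : ℕ} (a : Fin k → ℕ) : ℕ := ∑ i : Fin k, a i * Nat.fib (k - (i : ℕ))

lemma pow_succ_eq_fib_mul_add_fib {R : Type*} [CommRing R] {r : R} (hr : r ^ 2 = r + 1) (n : ℕ) :
    r ^ (n + 1) = Nat.fib (n + 1) * r + Nat.fib n := by
  induction n with
  | zero => simp
  | succ n ih =>
    rw [pow_succ, ih, Nat.fib_add_two]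
    push_cast
    linear_combination (Nat.fib (n + 1) : R) * hr

lemma sum_mul_pow_eq_Nw_mul_add_Mw {R : Type*} [CommRing R] {r : R} (hr : r ^ 2 = r + 1)
    {k : ℕ} (a : Fin k → ℕ) :
    ∑ i : Fin k, (a i : R) * r ^ (k + 1 - (i : ℕ)) = Nw a * r + Mw a := by
  simp only [Nw, Mw, Nat.cast_sum, Nat.cast_mul, Finset.sum_mul, ← Finset.sum_add_distrib]
  refine Finset.sum_congr rfl fun i _ => ?_
  obtain ⟨n, hn⟩ : ∃ n, k - (i : ℕ) = n := ⟨_, rfl⟩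
  have hsucc : k + 1 - (i : ℕ) = n + 1 := by omega
  rw [hsucc, hn, pow_succ_eq_fib_mul_add_fib hr]
  ring

lemma Xw_eq {k : ℕ} (a : Fin k → ℕ) : Xw a = Nw a * phi + Mw a :=
  sum_mul_pow_eq_Nw_mul_add_Mw goldenRatio_sq a

lemma Yw_eq {k : ℕ} (a : Fin k → ℕ) : Yw a = Nw a * psi + Mw a :=
  sum_mul_pow_eq_Nw_mul_add_Mw goldenConj_sq a

lemma Xw_sub_Yw {k : ℕ} (a : Fin k → ℕ) : Xw a - Yw a = Nw a * √5 := by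
  rw [Xw_eq, Yw_eq, ← goldenRatio_sub_goldenConj, phi_eq_goldenRatio, psi_eq_goldenConj]
  ring

lemma Yw_succ {m : ℕ} (a : Fin (m + 1) → ℕ) :
    Yw a = psi * Yw (a ∘ Fin.castSucc) + a (Fin.last m) * psi ^ 2 := by
  simp only [Yw, Fin.sum_univ_castSucc, Finset.mul_sum, Function.comp_apply, Fin.val_castSucc,
    Fin.val_last]
  congr 1
  · refine Finset.sum_congr rfl fun i _ => ?_
    rw [show m + 1 + 1 - (i : ℕ) = m + 1 - (i : ℕ) + 1 by omega]
    ring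
  · rw [show m + 1 + 1 - m = 2 by omega]

/-- Multiplying by `ψ ∈ (-1, 0)` and adding a digit times `ψ² = ψ + 1` maps the interval
`(-ψ - 1, -ψ)`, of length `1`, into itself. -/
lemma Yw_mem_Ioo {k : ℕ} (a : Fin k → ℕ) (ha : IsBin a) : Yw a ∈ Set.Ioo (-psi - 1) (-psi) := by
  have hneg : psi < 0 := goldenConj_neg
  have hgt : -1 < psi := neg_one_lt_goldenConj
  have hsq : psi ^ 2 = psi + 1 := goldenConj_sq
  induction k with
  | zero =>
    simp only [Yw, Finset.univ_eq_empty, Finset.sum_empty, Set.mem_Ioo]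
    constructor <;> linarith
  | succ m ih =>
    obtain ⟨hlo, hhi⟩ := ih (a ∘ Fin.castSucc) fun i => ha _
    have hc0 : (0 : ℝ) ≤ a (Fin.last m) := Nat.cast_nonneg _
    have hc1 : (a (Fin.last m) : ℝ) ≤ 1 := by exact_mod_cast ha (Fin.last m)
    rw [Yw_succ, hsq]
    constructor <;> nlinarith

lemma abs_Yw_sub_Yw_lt_one {k j : ℕ} {a : Fin k → ℕ} {b : Fin j → ℕ} (ha : IsBin a)
    (hb : IsBin b) : |Yw a - Yw b| < 1 := by
  obtain ⟨ha₁, ha₂⟩ := Yw_mem_Ioo a ha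
  obtain ⟨hb₁, hb₂⟩ := Yw_mem_Ioo b hb
  rw [abs_lt]
  constructor <;> linarith

lemma Xw_lt_Xw_of_Nw_lt {k j : ℕ} {a : Fin k → ℕ} {b : Fin j → ℕ} (ha : IsBin a)
    (hb : IsBin b) (h : Nw a < Nw b) : Xw a < Xw b := by
  have hN : (Nw a : ℝ) + 1 ≤ Nw b := by exact_mod_cast h
  have hNsqrt := mul_le_mul_of_nonneg_right hN (Real.sqrt_nonneg 5)
  have hY := (abs_lt.mp (abs_Yw_sub_Yw_lt_one ha hb)).2
  have h5 : (1 : ℝ) < √5 := by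
    rw [← Real.sqrt_one]
    gcongr
    norm_num
  linarith [Xw_sub_Yw a, Xw_sub_Yw b]

-- For equal `N`, `Y(a) - Y(b) = M(a) - M(b)` is an integer of absolute value less than `1`.
lemma Xw_eq_Xw_of_Nw_eq {k j : ℕ} {a : Fin k → ℕ} {b : Fin j → ℕ} (ha : IsBin a)
    (hb : IsBin b) (h : Nw a = Nw b) : Xw a = Xw b := by
  have hY : Yw a - Yw b = ((Mw a - Mw b : ℤ) : ℝ) := by
    rw [Yw_eq, Yw_eq, h]
    push_cast
    ring
  have hM : Mw a = Mw b := by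
    have habs := abs_Yw_sub_Yw_lt_one ha hb
    rw [hY, ← Int.cast_abs, ← Int.cast_one, Int.cast_lt, Int.abs_lt_one_iff] at habs
    omega
  rw [Xw_eq, Xw_eq, h, hM]

/-- for binary words a, b, N(a) < N(b) iff X(a) < X(b). -/
theorem stmt_2 {k j : ℕ} (a : Fin k → ℕ) (b : Fin j → ℕ)
    (ha : IsBin a) (hb : IsBin b) :
    Nw a < Nw b ↔ Xw a < Xw b := by
  refine ⟨Xw_lt_Xw_of_Nw_lt ha hb, fun hX => lt_of_not_ge fun hle => ?_⟩
  rcases hle.lt_or_eq with hlt | heq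
  · exact (Xw_lt_Xw_of_Nw_lt hb ha hlt).not_gt hX
  · exact hX.ne (Xw_eq_Xw_of_Nw_eq hb ha heq).symm

end
end

section
/- Let n ≥ 1 have Zeckendorf word b_1⋯b_k and write (u, v, w) for the row vector (1 0 0)·A_{b_1}⋯A_{b_k}. Then u = R(n); moreover if y_n < 0 then v = R(n−1) and w = 0, and if y_n > 0 then v = 0 and w = R(n−1). (In particular exactly one of v, w is nonzero, according to the sign of y_n.) -/
open Real Finset

noncomputable section

/-- R(n): the number of partitions of n into distinct Fibonacci numbers, i.e. the number
of finite sets S of integers, each ≥ 2, with n = ∑_{i∈S} F_i.  (So R(0) = 1.) -/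
def R (n : ℕ) : ℕ :=
  Nat.card {S : Finset ℕ // (∀ i ∈ S, 2 ≤ i) ∧ ∑ i ∈ S, Nat.fib i = n}

/-- `IsZeck n b` : `b = b_1⋯b_k` is the Zeckendorf word of `n ≥ 1`, i.e. a binary word
with `b_1 = 1`, no two consecutive 1's, and N(b) = n. -/
def IsZeck (n : ℕ) {k : ℕ} (b : Fin k → ℕ) : Prop :=
  IsBin b ∧ (∀ h : 0 < k, b ⟨0, h⟩ = 1) ∧
    (∀ i j : Fin k, (j : ℕ) = (i : ℕ) + 1 → b i * b j = 0) ∧ Nw b = n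

/-- `IsXY n x y` : `(x, y) = (x_n, y_n)`, i.e. `x = X(b)` and `y = Y(b)` for the
Zeckendorf word `b` of `n` when `n ≥ 1`, and `(x, y) = (0, 0)` when `n = 0`. -/
def IsXY (n : ℕ) (x y : ℝ) : Prop :=
  (n = 0 ∧ x = 0 ∧ y = 0) ∨
    ∃ (k : ℕ) (b : Fin k → ℕ), IsZeck n b ∧ x = Xw b ∧ y = Yw b

/-- The rotation T by 1/φ² on [−1/φ², 1/φ), extended to ℝ by the same formula. -/
def T (y : ℝ) : ℝ := if y < 1 / phi ^ 3 then y + 1 / phi ^ 2 else y + 1 / phi ^ 2 - 1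

/-- The matrix A₁ with rows (1,0,1), (0,0,1), (0,0,0). -/
def A1 : Matrix (Fin 3) (Fin 3) ℕ := !![1, 0, 1; 0, 0, 1; 0, 0, 0]

/-- The matrix A₀ with rows (1,0,0), (1,0,1), (0,1,0). -/
def A0 : Matrix (Fin 3) (Fin 3) ℕ := !![1, 0, 0; 1, 0, 1; 0, 1, 0]

/-- The ordered product A_{b_1}·A_{b_2}·⋯·A_{b_k} along a word b. -/
def Aprod {k : ℕ} (b : Fin k → ℕ) : Matrix (Fin 3) (Fin 3) ℕ :=
  (List.ofFn fun i : Fin k => if b i = 1 then A1 else A0).prod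

lemma sqrt5_sq : Real.sqrt 5 ^ 2 = 5 := Real.sq_sqrt (by norm_num)

lemma sqrt5_lb : (2:ℝ) < Real.sqrt 5 := by
  nlinarith [Real.sqrt_nonneg 5, sqrt5_sq]

lemma sqrt5_ub : Real.sqrt 5 < 3 := by
  nlinarith [Real.sqrt_nonneg 5, sqrt5_sq]

lemma psi_neg : psi < 0 := by unfold psi; linarith [sqrt5_lb]

lemma psi_gt : (-1:ℝ) < psi := by unfold psi; linarith [sqrt5_ub]

lemma psi_sq : psi ^ 2 = psi + 1 := by
  unfold psi; linear_combination sqrt5_sq / 4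

-- counting machinery

def dsum (k : ℕ) (S : Finset ℕ) : ℕ := ∑ i ∈ S, Nat.fib (k + 1 - i)

def cnt2 (k j a x : ℕ) : ℕ :=
  ((Finset.range j).powerset.filter (fun S => dsum k S + a = x)).card

def nn (k : ℕ) (c : ℕ → ℕ) (j : ℕ) : ℕ := ∑ i ∈ Finset.range j, c i * Nat.fib (k + 1 - i)

def Yh (c : ℕ → ℕ) (j : ℕ) : ℝ := ∑ i ∈ Finset.range j, (c i : ℝ) * psi ^ (j + 1 - i)

def step (l : ℕ) (s : ℕ × ℕ × ℕ) : ℕ × ℕ × ℕ :=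
  if l = 1 then (s.1, 0, s.1 + s.2.1) else (s.1 + s.2.1, s.2.2, s.2.1)

def vrow (c : ℕ → ℕ) : ℕ → ℕ × ℕ × ℕ
  | 0 => (1, 0, 0)
  | (j+1) => step (c j) (vrow c j)

lemma cnt2_succ (k j a x : ℕ) :
    cnt2 k (j+1) a x = cnt2 k j a x + cnt2 k j (a + Nat.fib (k + 1 - j)) x := by
  unfold cnt2
  rw [Finset.range_add_one]
  rw [Finset.card_filter, Finset.card_filter, Finset.card_filter]
  rw [Finset.sum_powerset_insert (by simp)]
  congr 1
  apply Finset.sum_congr rfl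
  intro S hS
  have hj : j ∉ S := fun h => Finset.notMem_range_self (Finset.mem_powerset.mp hS h)
  have : dsum k (insert j S) = Nat.fib (k + 1 - j) + dsum k S := by
    unfold dsum; rw [Finset.sum_insert hj]
  rw [this]
  exact if_congr (by constructor <;> (intro h; omega)) rfl rfl

lemma cnt2_zero {k j a x : ℕ} (h : ∀ S ∈ (Finset.range j).powerset, dsum k S + a ≠ x) :
    cnt2 k j a x = 0 := by
  unfold cnt2
  rw [Finset.card_eq_zero, Finset.filter_eq_empty_iff]
  exact h

lemma cnt2_congr {k j a x a' x' : ℕ} (h : ∀ d, d + a = x ↔ d + a' = x') :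
    cnt2 k j a x = cnt2 k j a' x' := by
  unfold cnt2
  congr 1
  apply Finset.filter_congr
  intro S _
  simpa using h (dsum k S)

lemma cnt2_base (k a x : ℕ) : cnt2 k 0 a x = if a = x then 1 else 0 := by
  unfold cnt2
  simp only [Finset.range_zero, Finset.powerset_empty, Finset.filter_singleton]
  simp [dsum]
  split <;> simp

lemma nn_succ (k : ℕ) (c : ℕ → ℕ) (j : ℕ) :
    nn k c (j+1) = nn k c j + c j * Nat.fib (k + 1 - j) := by
  unfold nn; rw [Finset.sum_range_succ]

lemma nn_pos (k : ℕ) (c : ℕ → ℕ) (hc0 : c 0 = 1) {j : ℕ} (hj : 1 ≤ j) (hjk : j ≤ k) :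
    1 ≤ nn k c j := by
  unfold nn
  have h1 : 0 < Nat.fib (k + 1 - 0) := Nat.fib_pos.mpr (by omega)
  have h2 : c 0 * Nat.fib (k + 1 - 0) ≤ ∑ i ∈ Finset.range j, c i * Nat.fib (k+1-i) :=
    Finset.single_le_sum (f := fun i => c i * Nat.fib (k+1-i)) (fun i _ => Nat.zero_le _)
      (Finset.mem_range.mpr (by omega))
  have := hc0
  nlinarith [h1, h2]

lemma Yh_succ (c : ℕ → ℕ) (j : ℕ) :
    Yh c (j+1) = psi * Yh c j + (c j : ℝ) * psi ^ 2 := by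
  unfold Yh
  rw [Finset.sum_range_succ, Finset.mul_sum]
  congr 1
  · apply Finset.sum_congr rfl
    intro i hi
    have hi' : i < j := Finset.mem_range.mp hi
    have : j + 1 + 1 - i = (j + 1 - i) + 1 := by omega
    rw [this, pow_succ]
    ring
  · congr 2
    omega
def extw {k : ℕ} (b : Fin k → ℕ) : ℕ → ℕ := fun i => if h : i < k then b ⟨i, h⟩ else 0

lemma vrow_congr {c c' : ℕ → ℕ} (j : ℕ) (h : ∀ i < j, c i = c' i) :
    vrow c j = vrow c' j := by
  induction j with
  | zero => rfl
  | succ j ih =>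
    show step (c j) (vrow c j) = step (c' j) (vrow c' j)
    rw [ih (fun i hi => h i (by omega)), h j (by omega)]

lemma aprod_vrow {k : ℕ} (b : Fin k → ℕ) :
    Aprod b 0 0 = (vrow (extw b) k).1 ∧ Aprod b 0 1 = (vrow (extw b) k).2.1 ∧
      Aprod b 0 2 = (vrow (extw b) k).2.2 := by
  induction k with
  | zero =>
    unfold Aprod
    simp [vrow, Matrix.one_apply]
  | succ k ih =>
    have hfront := ih (fun i : Fin k => b i.castSucc)
    have hsplit : Aprod b = Aprod (fun i : Fin k => b i.castSucc) *
        (if b (Fin.last k) = 1 then A1 else A0) := by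
      unfold Aprod
      rw [List.ofFn_succ']
      rw [List.concat_eq_append, List.prod_append, List.prod_singleton]
    have hext : ∀ i < k, extw (fun i : Fin k => b i.castSucc) i = extw b i := by
      intro i hi
      unfold extw
      rw [dif_pos hi, dif_pos (by omega)]
      rfl
    have hvc : vrow (extw (fun i : Fin k => b i.castSucc)) k = vrow (extw b) k :=
      vrow_congr k hext
    rw [hvc] at hfront
    have hlast : extw b k = b (Fin.last k) := by
      unfold extw; rw [dif_pos (by omega)]; rfl
    have hv : vrow (extw b) (k+1) = step (b (Fin.last k)) (vrow (extw b) k) := by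
      show step (extw b k) (vrow (extw b) k) = _
      rw [hlast]
    obtain ⟨h0, h1, h2⟩ := hfront
    rw [hsplit, hv]
    by_cases hb : b (Fin.last k) = 1
    · rw [if_pos hb]
      unfold step
      rw [if_pos hb]
      refine ⟨?_, ?_, ?_⟩ <;>
        rw [Matrix.mul_apply, Fin.sum_univ_three, h0, h1, h2] <;>
        simp [A1, Matrix.vecHead, Matrix.vecTail] <;> ring
    · rw [if_neg hb]
      unfold step
      rw [if_neg hb]
      refine ⟨?_, ?_, ?_⟩ <;>
        rw [Matrix.mul_apply, Fin.sum_univ_three, h0, h1, h2] <;>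
        simp [A0, Matrix.vecHead, Matrix.vecTail] <;> ring
lemma double_img {k : ℕ} {S : Finset ℕ} (h : ∀ i ∈ S, i ≤ k + 1) :
    (S.image (fun i => k + 1 - i)).image (fun i => k + 1 - i) = S := by
  rw [Finset.image_image]
  have h2 : S.image ((fun i => k + 1 - i) ∘ (fun i => k + 1 - i)) = S.image id := by
    apply Finset.image_congr
    intro i hi
    have := h i hi
    simp only [Function.comp_apply, id_eq]
    omega
  rw [h2, Finset.image_id]

lemma R_eq_cnt2 (k m : ℕ) (hm : m < Nat.fib (k+2)) : R m = cnt2 k k 0 m := by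
  classical
  unfold R cnt2
  have hmem : ∀ S : Finset ℕ, ((∀ i ∈ S, 2 ≤ i) ∧ ∑ i ∈ S, Nat.fib i = m) →
      ∀ i ∈ S, 2 ≤ i ∧ i ≤ k + 1 := by
    intro S hS i hi
    refine ⟨hS.1 i hi, ?_⟩
    by_contra hcon
    have h1 : Nat.fib (k+2) ≤ Nat.fib i := Nat.fib_mono (by omega)
    have h2 : Nat.fib i ≤ ∑ i ∈ S, Nat.fib i :=
      Finset.single_le_sum (fun i _ => Nat.zero_le _) hi
    omega
  rw [← Nat.card_eq_finsetCard]
  apply Nat.card_congr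
  refine ⟨fun S => ⟨S.1.image (fun i => k + 1 - i), ?_⟩,
          fun T => ⟨T.1.image (fun i => k + 1 - i), ?_⟩, ?_, ?_⟩
  · -- forward membership
    have hb := hmem S.1 S.2
    rw [Finset.mem_filter, Finset.mem_powerset]
    constructor
    · intro t ht
      rw [Finset.mem_image] at ht
      obtain ⟨i, hi, rfl⟩ := ht
      have := hb i hi
      rw [Finset.mem_range]
      omega
    · have hinj : ∀ x ∈ S.1, ∀ y ∈ S.1, k + 1 - x = k + 1 - y → x = y := by
        intro x hx y hy hxy
        have := hb x hx; have := hb y hy; omega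
      unfold dsum
      rw [Finset.sum_image hinj]
      have he : ∀ i ∈ S.1, Nat.fib (k + 1 - (k + 1 - i)) = Nat.fib i := by
        intro i hi
        have := hb i hi
        congr 1
        omega
      rw [Finset.sum_congr rfl he, S.2.2]
      omega
  · -- backward membership
    have hT := Finset.mem_filter.mp T.2
    have hsub := Finset.mem_powerset.mp hT.1
    constructor
    · intro i hi
      rw [Finset.mem_image] at hi
      obtain ⟨t, ht, rfl⟩ := hi
      have : t < k := Finset.mem_range.mp (hsub ht)
      omega
    · have hinj : ∀ x ∈ T.1, ∀ y ∈ T.1, k + 1 - x = k + 1 - y → x = y := by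
        intro x hx y hy hxy
        have : x < k := Finset.mem_range.mp (hsub hx)
        have : y < k := Finset.mem_range.mp (hsub hy)
        omega
      rw [Finset.sum_image hinj]
      have h2 := hT.2
      unfold dsum at h2
      omega
  · intro S
    apply Subtype.ext
    exact double_img (fun i hi => (hmem S.1 S.2 i hi).2)
  · intro T
    apply Subtype.ext
    have hT := Finset.mem_filter.mp T.2
    have hsub := Finset.mem_powerset.mp hT.1
    exact double_img (fun t ht => by have : t < k := Finset.mem_range.mp (hsub ht); omega)
lemma zeck_tail (k : ℕ) (c : ℕ → ℕ) (hc1 : ∀ i, c i ≤ 1)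
    (hcz : ∀ i, c i = 1 → c (i+1) = 0) :
    ∀ l j, j ≤ k → k ≤ j + l →
      (∑ i ∈ Finset.Ico j k, c i * Nat.fib (k + 1 - i)) < Nat.fib (k + 2 - j) := by
  intro l
  induction l using Nat.strong_induction_on with
  | _ l ih =>
    intro j hjk hkl
    by_cases hj : j = k
    · subst hj
      simp only [Finset.Ico_self, Finset.sum_empty]
      exact Nat.fib_pos.mpr (by omega)
    · have hjlt : j < k := by omega
      have hl : 1 ≤ l := by omega
      rw [← Finset.insert_Ico_add_one_left_eq_Ico hjlt, Finset.sum_insert (by simp)]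
      obtain ⟨d, rfl⟩ : ∃ d, k = j + d := ⟨k - j, by omega⟩
      have hd : 1 ≤ d := by omega
      have e1 : j + d + 1 - j = d + 1 := by omega
      have e2 : j + d + 2 - j = d + 2 := by omega
      rw [e1, e2]
      have hfib : Nat.fib (d + 2) = Nat.fib d + Nat.fib (d + 1) := Nat.fib_add_two
      rcases Nat.le_one_iff_eq_zero_or_eq_one.mp (hc1 j) with hc | hc
      · rw [hc]
        have h2 := ih (l-1) (by omega) (j+1) (by omega) (by omega)
        have e3 : j + d + 2 - (j + 1) = d + 1 := by omega
        rw [e3] at h2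
        simp only [Nat.succ_eq_add_one, zero_mul]
        have : Nat.fib (d+1) ≤ Nat.fib (d+2) := Nat.fib_mono (by omega)
        omega
      · rw [hc]
        have hc2 : c (j+1) = 0 := hcz j hc
        by_cases hj1 : j + 1 = j + d
        · have : Finset.Ico (j+1) (j+d) = ∅ := by
            rw [Finset.Ico_eq_empty_iff]; omega
          rw [this, Finset.sum_empty]
          have : 1 ≤ Nat.fib d := Nat.fib_pos.mpr (by omega)
          omega
        · have hd2 : 2 ≤ d := by omega
          rw [← Finset.insert_Ico_add_one_left_eq_Ico (show j+1 < j+d by omega),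
            Finset.sum_insert (by simp), hc2]
          have h2 := ih (l-2) (by omega) (j+2) (by omega) (by omega)
          have e4 : j + d + 2 - (j + 2) = d := by omega
          rw [e4] at h2
          simp only [Nat.succ_eq_add_one, zero_mul]
          have h3 : ∑ x ∈ Finset.Ico (j+1+1) (j+d), c x * Nat.fib (j+d+1-x)
              = ∑ i ∈ Finset.Ico (j+2) (j+d), c i * Nat.fib (j+d+1-i) := rfl
          omega

lemma nn_lt (k : ℕ) (c : ℕ → ℕ) (hc1 : ∀ i, c i ≤ 1)
    (hcz : ∀ i, c i = 1 → c (i+1) = 0) : nn k c k < Nat.fib (k + 2) := by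
  have := zeck_tail k c hc1 hcz k 0 (by omega) (by omega)
  unfold nn
  rw [Finset.range_eq_Ico]
  simpa using this
lemma pkg (k : ℕ) (c : ℕ → ℕ) (hc1 : ∀ i, c i ≤ 1) (hc0 : c 0 = 1)
    (hcz : ∀ i, c i = 1 → c (i+1) = 0) :
    ∀ j, 1 ≤ j → j + 1 ≤ k →
      ((∀ S ∈ (Finset.range j).powerset,
          nn k c j < dsum k S + Nat.fib (k+3-j) → dsum k S < nn k c j + Nat.fib (k+3-j) →
          (dsum k S + Nat.fib (k+2-j) = nn k c j ∨ dsum k S + Nat.fib (k+1-j) = nn k c j ∨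
           dsum k S = nn k c j ∨ (c j = 0 ∧ dsum k S = nn k c j + Nat.fib (k+1-j)) ∨
           dsum k S = nn k c j + Nat.fib (k+2-j))) ∧
        (cnt2 k j 0 (nn k c j) = (vrow c j).1 ∧
         cnt2 k j (Nat.fib (k+1-j)) (nn k c j) = (vrow c j).2.1 ∧
         cnt2 k j (Nat.fib (k+2-j)) (nn k c j) = (vrow c j).2.2) ∧
        ((-psi^2 < Yh c j ∧ Yh c j < -psi) ∧
         ((Yh c j < 0 ∧ (vrow c j).2.2 = 0) ∨ (0 < Yh c j ∧ (vrow c j).2.1 = 0)))) := by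
  have hpsin := psi_neg
  have hpsig := psi_gt
  have hpsisq := psi_sq
  intro j
  induction j with
  | zero => omega
  | succ j ihj =>
    intro _ hjk
    by_cases hj0 : j = 0
    · -- base case j+1 = 1
      subst hj0
      have hk2 : 2 ≤ k := by omega
      have hnn1 : nn k c 1 = Nat.fib (k+1) := by
        unfold nn
        rw [Finset.sum_range_one, hc0]
        simp
      have hvr : vrow c 1 = (1, 0, 1) := by
        show step (c 0) (1,0,0) = (1,0,1)
        rw [hc0]
        simp [step]
      have hfibk : Nat.fib k < Nat.fib (k+1) := Nat.fib_lt_fib_succ (by omega)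
      have hfibk0 : 0 < Nat.fib k := Nat.fib_pos.mpr (by omega)
      refine ⟨?_, ⟨?_, ?_, ?_⟩, ?_⟩
      · intro S hS h1 h2
        rw [Finset.mem_powerset, Finset.range_one, Finset.subset_singleton_iff] at hS
        have e2 : k + 2 - 1 = k + 1 := by omega
        rcases hS with rfl | rfl
        · left
          rw [e2, hnn1]
          simp [dsum]
        · right; right; left
          rw [hnn1]
          simp [dsum]
      · rw [cnt2_succ, cnt2_base, cnt2_base, hnn1, hvr]
        have e0 : k + 1 - 0 = k + 1 := by omega
        rw [e0]
        rw [if_neg (by omega), if_pos (by omega)]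
      · rw [cnt2_succ, cnt2_base, cnt2_base, hnn1, hvr]
        have e0 : k + 1 - 0 = k + 1 := by omega
        have e1 : k + 1 - 1 = k := by omega
        rw [e0, e1]
        rw [if_neg (by omega), if_neg (by omega)]
      · rw [cnt2_succ, cnt2_base, cnt2_base, hnn1, hvr]
        have e0 : k + 1 - 0 = k + 1 := by omega
        have e2 : k + 2 - 1 = k + 1 := by omega
        rw [e0, e2]
        rw [if_pos (by omega), if_neg (by omega)]
      · have hY1 : Yh c 1 = psi^2 := by
          unfold Yh
          rw [Finset.sum_range_one, hc0]
          norm_num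
        rw [hY1, hvr]
        have hsq : (0:ℝ) < psi^2 := by rw [psi_sq]; linarith
        have hneg : psi * (psi + 1) < 0 := mul_neg_of_neg_of_pos hpsin (by linarith)
        have e3 : psi * (psi + 1) = psi^2 + psi := by ring
        refine ⟨⟨by linarith, by linarith⟩, Or.inr ⟨hsq, rfl⟩⟩
    · -- inductive step
      have hj1 : 1 ≤ j := by omega
      obtain ⟨hw, ⟨hu, hv, hwc⟩, ⟨hYlo, hYhi⟩, hYsgn⟩ := ihj hj1 (by omega)
      obtain ⟨m', hm'⟩ : ∃ m', k - j = m' + 2 := ⟨k - j - 2, by omega⟩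
      have eA : k+1-(j+1) = m'+2 := by omega
      have eB : k+2-(j+1) = m'+3 := by omega
      have eC : k+3-(j+1) = m'+4 := by omega
      have eD : k+1-j = m'+3 := by omega
      have eE : k+2-j = m'+4 := by omega
      have eF : k+3-j = m'+5 := by omega
      rw [eD] at hv
      rw [eE] at hwc
      rw [eD, eE, eF] at hw
      have hf1 : Nat.fib (m'+3) = Nat.fib (m'+1) + Nat.fib (m'+2) := Nat.fib_add_two
      have hf2 : Nat.fib (m'+4) = Nat.fib (m'+2) + Nat.fib (m'+3) := Nat.fib_add_two
      have hf3 : Nat.fib (m'+5) = Nat.fib (m'+3) + Nat.fib (m'+4) := Nat.fib_add_two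
      have hp1 : 0 < Nat.fib (m'+1) := Nat.fib_pos.mpr (by omega)
      have hp2 : 0 < Nat.fib (m'+2) := Nat.fib_pos.mpr (by omega)
      have hnns : nn k c (j+1) = nn k c j + c j * Nat.fib (m'+3) := by
        rw [nn_succ, eD]
      have hvs : vrow c (j+1) = step (c j) (vrow c j) := rfl
      have hYs : Yh c (j+1) = psi * Yh c j + (c j : ℝ) * psi^2 := Yh_succ c j
      rcases Nat.le_one_iff_eq_zero_or_eq_one.mp (hc1 j) with hc | hc
      · -- c j = 0
        rw [hc] at hnns
        rw [hc] at hvs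
        rw [hc] at hYs
        simp only [Nat.zero_mul, Nat.add_zero] at hnns
        have hst : step 0 (vrow c j) =
            ((vrow c j).1 + (vrow c j).2.1, (vrow c j).2.2, (vrow c j).2.1) := by
          simp [step]
        rw [hst] at hvs
        refine ⟨?_, ⟨?_, ?_, ?_⟩, ?_⟩
        · -- window
          intro S hS h1 h2
          rw [hnns] at h1 h2 ⊢
          rw [eC] at h1 h2
          rw [eA, eB]
          by_cases hjS : j ∈ S
          · have hS' : S.erase j ∈ (Finset.range j).powerset := by
              rw [Finset.mem_powerset]
              intro x hx
              have hx1 := Finset.mem_of_mem_erase hx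
              have hx2 := Finset.ne_of_mem_erase hx
              have := Finset.mem_powerset.mp hS hx1
              rw [Finset.mem_range] at *
              omega
            have hds : dsum k S = dsum k (S.erase j) + Nat.fib (m'+3) := by
              unfold dsum
              rw [← Finset.sum_erase_add S _ hjS]
              congr 1
              show Nat.fib (k+1-j) = Nat.fib (m'+3)
              rw [eD]
            rw [hds] at h1 h2 ⊢
            have hw' := hw (S.erase j) hS' (by omega) (by omega)
            rcases hw' with h | h | h | ⟨h0, h⟩ | h <;> omega
          · have hS' : S ∈ (Finset.range j).powerset := by
              rw [Finset.mem_powerset]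
              intro x hx
              have := Finset.mem_powerset.mp hS hx
              rw [Finset.mem_range] at *
              have : x ≠ j := fun hxx => hjS (hxx ▸ hx)
              omega
            have hw' := hw S hS' (by omega) (by omega)
            rcases hw' with h | h | h | ⟨h0, h⟩ | h <;> omega
        · -- U count
          rw [cnt2_succ, hnns, hvs, eD]
          rw [show (0:ℕ) + Nat.fib (m'+3) = Nat.fib (m'+3) from by omega]
          rw [hu, hv]
        · -- V count
          rw [cnt2_succ, hnns, eA, eD]
          have hz : cnt2 k j (Nat.fib (m'+2)) (nn k c j) = 0 := by
            apply cnt2_zero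
            intro S hS heq
            have hw' := hw S hS (by omega) (by omega)
            rcases hw' with h | h | h | ⟨h0, h⟩ | h <;> omega
          rw [hz]
          rw [show Nat.fib (m'+2) + Nat.fib (m'+3) = Nat.fib (m'+4) from by omega]
          rw [hwc, hvs]
          dsimp only
          omega
        · -- W count
          rw [cnt2_succ, hnns, eB, eD]
          have hz : cnt2 k j (Nat.fib (m'+3) + Nat.fib (m'+3)) (nn k c j) = 0 := by
            apply cnt2_zero
            intro S hS heq
            have hw' := hw S hS (by omega) (by omega)
            rcases hw' with h | h | h | ⟨h0, h⟩ | h <;> omega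
          rw [hz, hv, hvs]
          dsimp only
          omega
        · -- Y
          rw [hYs, hvs]
          push_cast
          rw [zero_mul, add_zero]
          have hsq : (0:ℝ) < psi^2 := by rw [psi_sq]; linarith
          have hprod1 : psi * (-psi) < psi * Yh c j := mul_lt_mul_of_neg_left hYhi hpsin
          have hprod2 : psi * Yh c j < psi * (-psi^2) := mul_lt_mul_of_neg_left hYlo hpsin
          have e1 : psi * (-psi) = -psi^2 := by ring
          have e2 : psi * (-psi^2) = -psi^2 - psi := by linear_combination (-psi) * hpsisq
          constructor
          · constructor
            · linarith
            · linarith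
          · rcases hYsgn with ⟨hy, hz⟩ | ⟨hy, hz⟩
            · right
              exact ⟨mul_pos_of_neg_of_neg hpsin hy, hz⟩
            · left
              exact ⟨mul_neg_of_neg_of_pos hpsin hy, hz⟩
      · -- c j = 1
        have hnext : c (j+1) = 0 := hcz j hc
        rw [hc] at hnns
        rw [hc] at hvs
        rw [hc] at hYs
        simp only [Nat.one_mul] at hnns
        have hst : step 1 (vrow c j) =
            ((vrow c j).1, 0, (vrow c j).1 + (vrow c j).2.1) := by
          simp [step]
        rw [hst] at hvs
        refine ⟨?_, ⟨?_, ?_, ?_⟩, ?_⟩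
        · -- window
          intro S hS h1 h2
          rw [hnns] at h1 h2 ⊢
          rw [eC] at h1 h2
          rw [eA, eB]
          by_cases hjS : j ∈ S
          · have hS' : S.erase j ∈ (Finset.range j).powerset := by
              rw [Finset.mem_powerset]
              intro x hx
              have hx1 := Finset.mem_of_mem_erase hx
              have hx2 := Finset.ne_of_mem_erase hx
              have := Finset.mem_powerset.mp hS hx1
              rw [Finset.mem_range] at *
              omega
            have hds : dsum k S = dsum k (S.erase j) + Nat.fib (m'+3) := by
              unfold dsum
              rw [← Finset.sum_erase_add S _ hjS]
              congr 1
              show Nat.fib (k+1-j) = Nat.fib (m'+3)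
              rw [eD]
            rw [hds] at h1 h2 ⊢
            have hw' := hw (S.erase j) hS' (by omega) (by omega)
            rcases hw' with h | h | h | ⟨h0, h⟩ | h <;> omega
          · have hS' : S ∈ (Finset.range j).powerset := by
              rw [Finset.mem_powerset]
              intro x hx
              have := Finset.mem_powerset.mp hS hx
              rw [Finset.mem_range] at *
              have : x ≠ j := fun hxx => hjS (hxx ▸ hx)
              omega
            have hw' := hw S hS' (by omega) (by omega)
            rcases hw' with h | h | h | ⟨h0, h⟩ | h <;> omega
        · -- U count
          rw [cnt2_succ, hnns, hvs, eD]
          have hz : cnt2 k j 0 (nn k c j + Nat.fib (m'+3)) = 0 := by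
            apply cnt2_zero
            intro S hS heq
            have hw' := hw S hS (by omega) (by omega)
            rcases hw' with h | h | h | ⟨h0, h⟩ | h <;> omega
          rw [hz]
          have hcg : cnt2 k j (0 + Nat.fib (m'+3)) (nn k c j + Nat.fib (m'+3)) =
              cnt2 k j 0 (nn k c j) := cnt2_congr (fun d => by omega)
          rw [hcg, hu]
          dsimp only
          omega
        · -- V count
          rw [cnt2_succ, hnns, eA, eD]
          have hz1 : cnt2 k j (Nat.fib (m'+2)) (nn k c j + Nat.fib (m'+3)) = 0 := by
            apply cnt2_zero
            intro S hS heq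
            have hw' := hw S hS (by omega) (by omega)
            rcases hw' with h | h | h | ⟨h0, h⟩ | h <;> omega
          have hz2 : cnt2 k j (Nat.fib (m'+2) + Nat.fib (m'+3)) (nn k c j + Nat.fib (m'+3)) = 0 := by
            apply cnt2_zero
            intro S hS heq
            have hw' := hw S hS (by omega) (by omega)
            rcases hw' with h | h | h | ⟨h0, h⟩ | h <;> omega
          rw [hz1, hz2, hvs]
        · -- W count
          rw [cnt2_succ, hnns, eB, eD]
          have hcg1 : cnt2 k j (Nat.fib (m'+3)) (nn k c j + Nat.fib (m'+3)) =
              cnt2 k j 0 (nn k c j) := cnt2_congr (fun d => by omega)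
          have hcg2 : cnt2 k j (Nat.fib (m'+3) + Nat.fib (m'+3)) (nn k c j + Nat.fib (m'+3)) =
              cnt2 k j (Nat.fib (m'+3)) (nn k c j) := cnt2_congr (fun d => by omega)
          rw [hcg1, hcg2, hu, hv, hvs]
        · -- Y
          rw [hYs, hvs]
          push_cast
          rw [one_mul]
          have hsq : (0:ℝ) < psi^2 := by rw [psi_sq]; linarith
          have hprod1 : psi * (-psi) < psi * Yh c j := mul_lt_mul_of_neg_left hYhi hpsin
          have hprod2 : psi * Yh c j < psi * (-psi^2) := mul_lt_mul_of_neg_left hYlo hpsin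
          have e1 : psi * (-psi) = -psi^2 := by ring
          have e2 : psi * (-psi^2) = -psi^2 - psi := by linear_combination (-psi) * hpsisq
          have hy1 : 0 < psi * Yh c j + psi^2 := by linarith
          have hy2 : psi * Yh c j + psi^2 < -psi := by linarith
          exact ⟨⟨by linarith, hy2⟩, Or.inr ⟨hy1, by trivial⟩⟩
lemma Nw_eq_nn {k : ℕ} (b : Fin k → ℕ) : Nw b = nn k (extw b) k := by
  unfold Nw nn
  rw [← Fin.sum_univ_eq_sum_range (fun i => extw b i * Nat.fib (k + 1 - i)) k]
  apply Finset.sum_congr rfl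
  intro i _
  unfold extw
  rw [dif_pos i.isLt]

lemma Yw_eq_Yh {k : ℕ} (b : Fin k → ℕ) : Yw b = Yh (extw b) k := by
  unfold Yw Yh
  rw [← Fin.sum_univ_eq_sum_range (fun i => (extw b i : ℝ) * psi ^ (k + 1 - i)) k]
  apply Finset.sum_congr rfl
  intro i _
  unfold extw
  rw [dif_pos i.isLt]

/-- if n ≥ 1 has Zeckendorf word b_1⋯b_k and
(u v w) = (1 0 0)·A_{b_1}⋯A_{b_k}, then u = R(n); if y_n < 0 then v = R(n−1) and w = 0,
and if y_n > 0 then v = 0 and w = R(n−1). -/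
theorem stmt_9 (n : ℕ) (hn : 1 ≤ n) {k : ℕ} (b : Fin k → ℕ) (hb : IsZeck n b) :
    Aprod b 0 0 = R n ∧
    (Yw b < 0 → Aprod b 0 1 = R (n - 1) ∧ Aprod b 0 2 = 0) ∧
    (0 < Yw b → Aprod b 0 1 = 0 ∧ Aprod b 0 2 = R (n - 1)) := by
  obtain ⟨hbin, hfirst, hcons, hNw⟩ := hb
  have hpsin := psi_neg
  have hpsig := psi_gt
  have hpsisq := psi_sq
  have hsq : (0:ℝ) < psi^2 := by rw [psi_sq]; linarith
  have hk1 : 1 ≤ k := by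
    by_contra hk
    have hk0 : k = 0 := by omega
    subst hk0
    unfold Nw at hNw
    simp at hNw
    omega
  have hc1 : ∀ i, extw b i ≤ 1 := by
    intro i
    unfold extw
    split
    · exact hbin _
    · omega
  have hc0 : extw b 0 = 1 := by
    unfold extw
    rw [dif_pos (by omega : 0 < k)]
    exact hfirst hk1
  have hcz : ∀ i, extw b i = 1 → extw b (i+1) = 0 := by
    intro i hi
    unfold extw
    split
    · rename_i h
      have hik : i < k := by omega
      have := hcons ⟨i, hik⟩ ⟨i+1, h⟩ rfl
      unfold extw at hi
      rw [dif_pos hik] at hi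
      rw [hi] at this
      simpa using this
    · rfl
  have hnk : nn k (extw b) k = n := by rw [← Nw_eq_nn, hNw]
  have hnlt : n < Nat.fib (k+2) := hnk ▸ nn_lt k (extw b) hc1 hcz
  have hA := aprod_vrow b
  have hYk : Yw b = Yh (extw b) k := Yw_eq_Yh b
  have hf2 : Nat.fib 2 = 1 := by decide
  have hf3 : Nat.fib 3 = 2 := by decide
  have hf4 : Nat.fib 4 = 3 := by decide
  by_cases hk : k = 1
  · -- special case k = 1
    subst hk
    have hn1 : n = 1 := by
      rw [← hnk]
      unfold nn
      rw [Finset.sum_range_one, hc0, hf2]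
    have hvr : vrow (extw b) 1 = (1, 0, 1) := by
      show step (extw b 0) (1,0,0) = (1,0,1)
      rw [hc0]
      simp [step]
    rw [hvr] at hA
    have hR1 : R 1 = 1 := by
      rw [R_eq_cnt2 1 1 (by decide), cnt2_succ, cnt2_base, cnt2_base]
      norm_num
    have hR0 : R 0 = 1 := by
      rw [R_eq_cnt2 1 0 (by decide), cnt2_succ, cnt2_base, cnt2_base]
      norm_num
    have hY : Yw b = psi^2 := by
      rw [hYk]
      unfold Yh
      rw [Finset.sum_range_one, hc0]
      norm_num
    refine ⟨?_, ?_, ?_⟩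
    · rw [hA.1, hn1, hR1]
    · intro hy
      rw [hY] at hy
      linarith
    · intro _
      rw [hn1]
      exact ⟨hA.2.1, by rw [hA.2.2, hR0]⟩
  · -- main case k ≥ 2
    have hk2 : 2 ≤ k := by omega
    obtain ⟨hw, ⟨hu, hv, hwc⟩, ⟨hYlo, hYhi⟩, hYsgn⟩ :=
      pkg k (extw b) hc1 hc0 hcz (k-1) (by omega) (by omega)
    have e1 : k+1-(k-1) = 2 := by omega
    have e2 : k+2-(k-1) = 3 := by omega
    have e3 : k+3-(k-1) = 4 := by omega
    rw [e1, hf2] at hv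
    rw [e2, hf3] at hwc
    rw [e1, e2, e3, hf2, hf3, hf4] at hw
    have hsucc : (k-1)+1 = k := by omega
    have hnn : nn k (extw b) k = nn k (extw b) (k-1) + extw b (k-1) * 1 := by
      have h := nn_succ k (extw b) (k-1)
      rw [hsucc, e1, hf2] at h
      exact h
    have hsp : ∀ a x, cnt2 k k a x = cnt2 k (k-1) a x + cnt2 k (k-1) (a + 1) x := by
      intro a x
      have h := cnt2_succ k (k-1) a x
      rw [hsucc, e1, hf2] at h
      exact h
    have hvk : vrow (extw b) k = step (extw b (k-1)) (vrow (extw b) (k-1)) := by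
      have h : vrow (extw b) ((k-1)+1) = step (extw b (k-1)) (vrow (extw b) (k-1)) := rfl
      rw [hsucc] at h
      exact h
    have hYsucc : Yh (extw b) k =
        psi * Yh (extw b) (k-1) + (extw b (k-1) : ℝ) * psi^2 := by
      have h := Yh_succ (extw b) (k-1)
      rw [hsucc] at h
      exact h
    have hRn : R n = cnt2 k (k-1) 0 n + cnt2 k (k-1) 1 n := by
      rw [R_eq_cnt2 k n hnlt, hsp]
    have hRn1 : R (n-1) = cnt2 k (k-1) 0 (n-1) + cnt2 k (k-1) 1 (n-1) := by
      rw [R_eq_cnt2 k (n-1) (by omega), hsp]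
    have hnnpos : 1 ≤ nn k (extw b) (k-1) := nn_pos k (extw b) hc0 (by omega) (by omega)
    set N1 := nn k (extw b) (k-1) with hN1
    set u := (vrow (extw b) (k-1)).1 with hud
    set v := (vrow (extw b) (k-1)).2.1 with hvd
    set w := (vrow (extw b) (k-1)).2.2 with hwd
    have hprod1 : psi * (-psi) < psi * Yh (extw b) (k-1) :=
      mul_lt_mul_of_neg_left hYhi hpsin
    have hprod2 : psi * Yh (extw b) (k-1) < psi * (-psi^2) :=
      mul_lt_mul_of_neg_left hYlo hpsin
    have ee1 : psi * (-psi) = -psi^2 := by ring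
    have ee2 : psi * (-psi^2) = -psi^2 - psi := by linear_combination (-psi) * hpsisq
    rcases Nat.le_one_iff_eq_zero_or_eq_one.mp (hc1 (k-1)) with hc | hc
    · -- last letter 0
      have hneq : n = N1 := by
        rw [← hnk, hnn, hc]
        omega
      have hstep : step (extw b (k-1)) (vrow (extw b) (k-1)) = (u + v, w, v) := by
        rw [hc]
        simp [step]
        exact ⟨rfl, rfl, rfl⟩
      rw [hstep] at hvk
      have hy : Yw b = psi * Yh (extw b) (k-1) := by
        rw [hYk, hYsucc, hc]
        push_cast
        ring
      have hRneq : R n = u + v := by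
        rw [hRn, hneq, hu, hv]
      have hRn1eq : R (n-1) = v + w := by
        rw [hRn1]
        have hg1 : cnt2 k (k-1) 0 (n-1) = cnt2 k (k-1) 1 N1 :=
          cnt2_congr (fun d => by omega)
        have hg2 : cnt2 k (k-1) 1 (n-1) = cnt2 k (k-1) 2 N1 :=
          cnt2_congr (fun d => by omega)
        rw [hg1, hg2, hv, hwc]
      refine ⟨?_, ?_, ?_⟩
      · rw [hA.1, hvk, hRneq]
      · intro hyneg
        rcases hYsgn with ⟨hs, hz⟩ | ⟨hs, hz⟩
        · exfalso
          have : 0 < Yw b := by rw [hy]; exact mul_pos_of_neg_of_neg hpsin hs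
          linarith
        · constructor
          · rw [hA.2.1, hvk]
            show w = R (n-1)
            rw [hRn1eq]
            omega
          · rw [hA.2.2, hvk]
            exact hz
      · intro hypos
        rcases hYsgn with ⟨hs, hz⟩ | ⟨hs, hz⟩
        · constructor
          · rw [hA.2.1, hvk]
            exact hz
          · rw [hA.2.2, hvk]
            show v = R (n-1)
            rw [hRn1eq]
            omega
        · exfalso
          have : Yw b < 0 := by rw [hy]; exact mul_neg_of_neg_of_pos hpsin hs
          linarith
    · -- last letter 1
      have hneq : n = N1 + 1 := by
        rw [← hnk, hnn, hc]
      have hstep : step (extw b (k-1)) (vrow (extw b) (k-1)) = (u, 0, u + v) := by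
        rw [hc]
        simp [step]
        exact ⟨rfl, rfl⟩
      rw [hstep] at hvk
      have hy : Yw b = psi * Yh (extw b) (k-1) + psi^2 := by
        rw [hYk, hYsucc, hc]
        push_cast
        ring
      have hypos : 0 < Yw b := by
        rw [hy]
        linarith
      have hz0 : cnt2 k (k-1) 0 n = 0 := by
        apply cnt2_zero
        intro S hS heq
        have hw' := hw S hS (by omega) (by omega)
        have hcc : extw b (k-1) = 1 := hc
        rcases hw' with h | h | h | ⟨h0, h⟩ | h <;> omega
      have hRneq : R n = u := by
        rw [hRn, hz0]
        have hg : cnt2 k (k-1) 1 n = cnt2 k (k-1) 0 N1 :=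
          cnt2_congr (fun d => by omega)
        rw [hg, hu]
        omega
      have hRn1eq : R (n-1) = u + v := by
        rw [hRn1]
        have hg1 : cnt2 k (k-1) 0 (n-1) = cnt2 k (k-1) 0 N1 :=
          cnt2_congr (fun d => by omega)
        have hg2 : cnt2 k (k-1) 1 (n-1) = cnt2 k (k-1) 1 N1 :=
          cnt2_congr (fun d => by omega)
        rw [hg1, hg2, hu, hv]
      refine ⟨?_, ?_, ?_⟩
      · rw [hA.1, hvk, hRneq]
      · intro hyneg
        linarith
      · intro _
        constructor
        · rw [hA.2.1, hvk]
        · rw [hA.2.2, hvk, hRn1eq]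


end
end
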